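/- arXiv:2504.03613 — 5 statements merged into one kernel-verified Lean document; each statement's English description precedes it below -/
import Mathlib

section
/- Let h : ℝⁿ → ℝ ∪ {+∞} be proper, closed and convex, and suppose that for every nonempty convex compact set S ⊆ dom h, h is strongly convex on S with some positive modulus. Then the interior of dom h* is nonempty, where h* is the Fenchel conjugate of h. -/
/-- Separation of a point from a closed convex set in `EuclideanSpace ℝ (Fin n) × ℝ`,
with the functional written as `x ↦ ⟪v, x⟫ + β * r`. -/
lemma sep_aux {n : ℕ} {Epi : Set (EuclideanSpace ℝ (Fin n) × ℝ)}
    (hc : Convex ℝ Epi) (hcl : IsClosed Epi) {p : EuclideanSpace ℝ (Fin n) × ℝ}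
    (hp : p ∉ Epi) :
    ∃ (v : EuclideanSpace ℝ (Fin n)) (β α : ℝ),
      (∀ q ∈ Epi, (inner ℝ v q.1 : ℝ) + β * q.2 < α) ∧
        α < (inner ℝ v p.1 : ℝ) + β * p.2 := by
  obtain ⟨f, α, hfs, hfp⟩ := geometric_hahn_banach_closed_point hc hcl hp
  set v := (InnerProductSpace.toDual ℝ (EuclideanSpace ℝ (Fin n))).symm
      (f.comp (ContinuousLinearMap.inl ℝ (EuclideanSpace ℝ (Fin n)) ℝ)) with hv
  have hf : ∀ q : EuclideanSpace ℝ (Fin n) × ℝ,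
      f q = (inner ℝ v q.1 : ℝ) + f (0, 1) * q.2 := by
    intro q
    have h1 : (inner ℝ v q.1 : ℝ) = f (q.1, 0) := by
      rw [hv, InnerProductSpace.toDual_symm_apply]; rfl
    have h2 : ((q.1, (0 : ℝ)) : EuclideanSpace ℝ (Fin n) × ℝ)
        + q.2 • ((0 : EuclideanSpace ℝ (Fin n)), (1 : ℝ)) = q := by
      ext <;> simp
    calc f q = f ((q.1, (0:ℝ)) + q.2 • ((0 : EuclideanSpace ℝ (Fin n)), (1:ℝ))) := by rw [h2]
    _ = f (q.1, (0:ℝ)) + q.2 • f ((0 : EuclideanSpace ℝ (Fin n)), (1:ℝ)) := by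
        rw [map_add, map_smul]
    _ = (inner ℝ v q.1 : ℝ) + f (0, 1) * q.2 := by rw [h1, smul_eq_mul]; ring
  refine ⟨v, f (0, 1), α, fun q hq => ?_, ?_⟩
  · rw [← hf]; exact hfs q hq
  · rw [← hf]; exact hfp

/-- Under the same assumptions, the interior of the domain of the Fenchel conjugate
`h*` is nonempty, where `dom h* = {u | x ↦ ⟨u,x⟩ - h x is bounded above on D}`. -/
theorem stmt1 (n : ℕ) (h : EuclideanSpace ℝ (Fin n) → ℝ)
    (D : Set (EuclideanSpace ℝ (Fin n)))
    (hproper : D.Nonempty)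
    (hclosed : IsClosed {p : EuclideanSpace ℝ (Fin n) × ℝ | p.1 ∈ D ∧ h p.1 ≤ p.2})
    (hconv : ConvexOn ℝ D h)
    (hsc : ∀ S : Set (EuclideanSpace ℝ (Fin n)), S ⊆ D → S.Nonempty → Convex ℝ S →
      IsCompact S → ∃ μ : ℝ, 0 < μ ∧ StrongConvexOn S μ h) :
    (interior {u : EuclideanSpace ℝ (Fin n) |
      BddAbove ((fun x => (inner ℝ u x : ℝ) - h x) '' D)}).Nonempty := by
  classical
  by_contra hint
  rw [Set.not_nonempty_iff_eq_empty] at hint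
  set K := {u : EuclideanSpace ℝ (Fin n) |
      BddAbove ((fun x => (inner ℝ u x : ℝ) - h x) '' D)} with hKdef
  set Epi := {p : EuclideanSpace ℝ (Fin n) × ℝ | p.1 ∈ D ∧ h p.1 ≤ p.2} with hEdef
  have hEconv : Convex ℝ Epi := hconv.convex_epigraph
  obtain ⟨x₀, hx₀⟩ := hproper
  -- Step 1 : K is nonempty
  have hKne : K.Nonempty := by
    have hp : ((x₀, h x₀ - 1) : EuclideanSpace ℝ (Fin n) × ℝ) ∉ Epi := by
      intro hmem
      have := hmem.2
      simp only at this
      linarith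
    obtain ⟨v, β, α, hs, hpt⟩ := sep_aux hEconv hclosed hp
    have h1 : (inner ℝ v x₀ : ℝ) + β * h x₀ < α := hs (x₀, h x₀) ⟨hx₀, le_refl _⟩
    have hpt' : α < (inner ℝ v x₀ : ℝ) + β * (h x₀ - 1) := hpt
    have hβ : β < 0 := by nlinarith
    have hβne : β ≠ 0 := ne_of_lt hβ
    refine ⟨(-β)⁻¹ • v, ⟨(-β)⁻¹ * α, ?_⟩⟩
    rintro z ⟨x, hx, rfl⟩
    have h2 : (inner ℝ v x : ℝ) + β * h x < α := hs (x, h x) ⟨hx, le_refl _⟩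
    have hγ : (0:ℝ) < -β := by linarith
    have h3 := mul_le_mul_of_nonneg_left h2.le (le_of_lt (inv_pos.mpr hγ))
    have h4 : (-β)⁻¹ * ((inner ℝ v x : ℝ) + β * h x) = (-β)⁻¹ * (inner ℝ v x : ℝ) - h x := by
      field_simp; ring
    rw [h4] at h3
    simp only [real_inner_smul_left]
    linarith
  -- Step 2 : K is convex
  have hKconv : Convex ℝ K := by
    rintro u hu w hw a b ha hb hab
    obtain ⟨M, hM⟩ := hu
    obtain ⟨N, hN⟩ := hw
    refine ⟨a * M + b * N, ?_⟩
    rintro z ⟨x, hx, rfl⟩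
    have h1 : (inner ℝ u x : ℝ) - h x ≤ M := hM (Set.mem_image_of_mem _ hx)
    have h2 : (inner ℝ w x : ℝ) - h x ≤ N := hN (Set.mem_image_of_mem _ hx)
    simp only [inner_add_left, real_inner_smul_left]
    have hsum : a * h x + b * h x = h x := by rw [← add_mul, hab, one_mul]
    nlinarith [mul_le_mul_of_nonneg_left h1 ha, mul_le_mul_of_nonneg_left h2 hb]
  -- Step 3 : K lies in a hyperplane with normal d ≠ 0
  have hspan : affineSpan ℝ K ≠ ⊤ := by
    intro htop
    rw [← hKconv.interior_nonempty_iff_affineSpan_eq_top, hint] at htop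
    exact Set.not_nonempty_empty htop
  obtain ⟨u₀, hu₀⟩ := hKne
  have hdir : (affineSpan ℝ K).direction ≠ ⊤ := by
    intro htop
    exact hspan ((AffineSubspace.direction_eq_top_iff_of_nonempty
      (Iff.mpr (affineSpan_nonempty ℝ (s := K)) ⟨u₀, hu₀⟩)).mp htop)
  have horth : ((affineSpan ℝ K).direction)ᗮ ≠ ⊥ := by
    intro hbot
    exact hdir (Submodule.orthogonal_eq_bot_iff.mp hbot)
  obtain ⟨d, hdmem, hd0⟩ := Submodule.exists_mem_ne_zero_of_ne_bot horth
  set c : ℝ := inner ℝ u₀ d with hcdef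
  have hyp : ∀ u ∈ K, (inner ℝ u d : ℝ) = c := by
    intro u hu
    have hsub : u - u₀ ∈ (affineSpan ℝ K).direction := by
      have := AffineSubspace.vsub_mem_direction
        (subset_affineSpan ℝ K hu) (subset_affineSpan ℝ K hu₀)
      simpa using this
    have h0 : (inner ℝ (u - u₀) d : ℝ) = 0 :=
      (Submodule.mem_orthogonal _ d).mp hdmem (u - u₀) hsub
    rw [inner_sub_left] at h0
    rw [hcdef]
    linarith
  -- Step 4 : key claim: D contains all lines in direction d, and h is sub-affine along them
  have key : ∀ x ∈ D, ∀ t : ℝ, (x + t • d) ∈ D ∧ h (x + t • d) ≤ h x + t * c := by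
    intro x hx t
    by_contra hq
    have hq' : ((x + t • d, h x + t * c) : EuclideanSpace ℝ (Fin n) × ℝ) ∉ Epi := hq
    obtain ⟨v, β, α, hs, hpt⟩ := sep_aux hEconv hclosed hq'
    have hpt' : α < (inner ℝ v (x + t • d) : ℝ) + β * (h x + t * c) := hpt
    rw [inner_add_right, real_inner_smul_right] at hpt'
    have h1 : (inner ℝ v x : ℝ) + β * h x < α := hs (x, h x) ⟨hx, le_refl _⟩
    have hβ : β ≤ 0 := by
      by_contra hβpos
      push_neg at hβpos
      obtain ⟨A, hA⟩ : ∃ A : ℝ, β * A = α - (inner ℝ v x : ℝ) :=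
        ⟨(α - (inner ℝ v x : ℝ)) / β, by field_simp⟩
      have hr1 : h x ≤ max (h x) A + 1 := le_trans (le_max_left _ _) (by linarith)
      have h2 : (inner ℝ v x : ℝ) + β * (max (h x) A + 1) < α := hs (x, _) ⟨hx, hr1⟩
      have h3 := mul_le_mul_of_nonneg_left (le_max_right (h x) A) hβpos.le
      nlinarith
    rcases lt_or_eq_of_le hβ with hβneg | hβ0
    · -- β < 0
      have hβne : β ≠ 0 := ne_of_lt hβneg
      have hγ : (0:ℝ) < -β := by linarith
      have hwK : (-β)⁻¹ • v ∈ K := by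
        refine ⟨(-β)⁻¹ * α, ?_⟩
        rintro z ⟨y, hy, rfl⟩
        have h2 : (inner ℝ v y : ℝ) + β * h y < α := hs (y, h y) ⟨hy, le_refl _⟩
        have h3 := mul_le_mul_of_nonneg_left h2.le (le_of_lt (inv_pos.mpr hγ))
        have h4 : (-β)⁻¹ * ((inner ℝ v y : ℝ) + β * h y)
            = (-β)⁻¹ * (inner ℝ v y : ℝ) - h y := by
          field_simp; ring
        rw [h4] at h3
        simp only [real_inner_smul_left]
        linarith
      have hwd := hyp _ hwK
      rw [real_inner_smul_left] at hwd
      have hvd : (inner ℝ v d : ℝ) = -β * c := by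
        have h5 := congrArg (fun z : ℝ => -β * z) hwd
        rw [← mul_assoc, mul_inv_cancel₀ (by linarith : (-β : ℝ) ≠ 0), one_mul] at h5
        exact h5
      rw [hvd] at hpt'
      nlinarith
    · -- β = 0
      obtain ⟨M, hM⟩ := hu₀
      have hvK : u₀ + v ∈ K := by
        refine ⟨M + α, ?_⟩
        rintro z ⟨y, hy, rfl⟩
        have h2 : (inner ℝ v y : ℝ) + β * h y < α := hs (y, h y) ⟨hy, le_refl _⟩
        rw [hβ0, zero_mul, add_zero] at h2
        have h3 : (inner ℝ u₀ y : ℝ) - h y ≤ M := hM (Set.mem_image_of_mem _ hy)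
        show (inner ℝ (u₀ + v) y : ℝ) - h y ≤ M + α
        rw [inner_add_left]
        linarith
      have h4 := hyp _ hvK
      rw [inner_add_left, hcdef] at h4
      have hvd : (inner ℝ v d : ℝ) = 0 := by linarith
      rw [hβ0] at hpt' h1
      rw [hvd] at hpt'
      linarith
  -- Step 5 : contradiction with strong convexity on the segment [x₀, x₀ + d]
  set x₁ := x₀ + (1:ℝ) • d with hx₁def
  obtain ⟨hx₁D, hx₁⟩ := key x₀ hx₀ 1
  have hmD : x₀ + (1/2 : ℝ) • d ∈ D := (key x₀ hx₀ (1/2)).1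
  have hm_le : h x₀ + (1/2) * c ≤ h (x₀ + (1/2 : ℝ) • d) := by
    have h2 := (key (x₀ + (1/2 : ℝ) • d) hmD (-(1/2))).2
    have heq : x₀ + (1/2 : ℝ) • d + (-(1/2) : ℝ) • d = x₀ := by module
    rw [heq] at h2
    linarith
  have hSsub : segment ℝ x₀ x₁ ⊆ D := by
    intro y hy
    rw [segment_eq_image_lineMap] at hy
    obtain ⟨s, _, rfl⟩ := hy
    have hlm : AffineMap.lineMap x₀ x₁ s = x₀ + s • d := by
      rw [AffineMap.lineMap_apply]
      simp only [vsub_eq_sub, vadd_eq_add, hx₁def]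
      module
    rw [hlm]
    exact (key x₀ hx₀ s).1
  have hScomp : IsCompact (segment ℝ x₀ x₁) := by
    rw [segment_eq_image_lineMap]
    exact isCompact_Icc.image AffineMap.lineMap_continuous
  obtain ⟨μ, hμ, hsc'⟩ := hsc _ hSsub ⟨x₀, left_mem_segment ℝ x₀ x₁⟩
    (convex_segment _ _) hScomp
  have hmid := hsc'.2 (left_mem_segment ℝ x₀ x₁) (right_mem_segment ℝ x₀ x₁)
    (by norm_num : (0:ℝ) ≤ 1/2) (by norm_num : (0:ℝ) ≤ 1/2) (by norm_num : (1/2 : ℝ) + 1/2 = 1)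
  simp only [smul_eq_mul] at hmid
  have e1 : (1/2 : ℝ) • x₀ + (1/2 : ℝ) • x₁ = x₀ + (1/2 : ℝ) • d := by
    rw [hx₁def]; module
  have e2 : x₀ - x₁ = -d := by rw [hx₁def]; module
  rw [e1, e2, norm_neg] at hmid
  have hd2 : 0 < ‖d‖ := norm_pos_iff.mpr hd0
  nlinarith [hm_le, hx₁, hmid, mul_pos hμ (mul_pos hd2 hd2), sq_nonneg ‖d‖]
end

section
/- Let h : ℝⁿ → ℝ ∪ {+∞} be closed, convex, and twice continuously differentiable on its nonempty interior of domain. Let S ⊆ dom h be nonempty, convex and compact, and suppose there exists z ∈ int dom h such that κ := inf { λ_min(∇²h(x)) : x ∈ conv(S ∪ {z}) ∩ int dom h } > 0. Then h is κ-strongly convex on S. -/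
open Set Filter Topology
open scoped RealInnerProductSpace

lemma aux_convexOn {E : Type*} [NormedAddCommGroup E] [InnerProductSpace ℝ E]
    (h : E → ℝ) (O : Set E) (hO : IsOpen O) (hC2 : ContDiffOn ℝ 2 h O)
    (U : Set E) (hUconv : Convex ℝ U) (hUO : U ⊆ O) (κ : ℝ)
    (hhess : ∀ x ∈ U, ∀ v : E, κ * ‖v‖ ^ 2 ≤ fderiv ℝ (fderiv ℝ h) x v v) :
    ConvexOn ℝ U (fun x => h x - κ / 2 * ‖x‖ ^ 2) := by
  refine ⟨hUconv, ?_⟩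
  intro x hx y hy a b ha hb hab
  set v := y - x with hv
  set L : ℝ → E := fun t => x + t • v with hL
  have hseg : ∀ t ∈ Icc (0:ℝ) 1, L t ∈ U := by
    intro t ht
    exact hUconv.add_smul_sub_mem hx hy ht
  -- the 1D functions
  set φ : ℝ → ℝ := fun t => h (L t) - κ / 2 * ‖L t‖ ^ 2 with hφ
  set φ' : ℝ → ℝ := fun t =>
    fderiv ℝ h (L t) v - κ / 2 * (2 * ⟪x, v⟫ + 2 * t * ‖v‖ ^ 2) with hφ'
  -- derivative of L
  have hLd : ∀ t : ℝ, HasDerivAt L v t := by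
    intro t
    simpa [hL] using ((hasDerivAt_id t).smul_const v).const_add x
  -- first derivative of φ on the segment
  have hd1 : ∀ t ∈ Icc (0:ℝ) 1, HasDerivAt φ (φ' t) t := by
    intro t ht
    have hmem : L t ∈ O := hUO (hseg t ht)
    have hCA : ContDiffAt ℝ 2 h (L t) := hC2.contDiffAt (hO.mem_nhds hmem)
    have hdh : HasFDerivAt h (fderiv ℝ h (L t)) (L t) :=
      (hCA.differentiableAt (by norm_num)).hasFDerivAt
    have h1 : HasDerivAt (fun s => h (L s)) (fderiv ℝ h (L t) v) t :=
      hdh.comp_hasDerivAt t (hLd t)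
    -- norm-squared part
    have hq : ∀ s : ℝ, ‖L s‖ ^ 2 = ‖x‖ ^ 2 + 2 * s * ⟪x, v⟫ + s ^ 2 * ‖v‖ ^ 2 := by
      intro s
      rw [hL]
      simp only
      rw [norm_add_sq_real, real_inner_smul_right, norm_smul]
      simp [mul_pow]
      ring
    have h2 : HasDerivAt (fun s : ℝ => κ / 2 * ‖L s‖ ^ 2)
        (κ / 2 * (2 * ⟪x, v⟫ + 2 * t * ‖v‖ ^ 2)) t := by
      have : HasDerivAt (fun s : ℝ => ‖x‖ ^ 2 + 2 * s * ⟪x, v⟫ + s ^ 2 * ‖v‖ ^ 2)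
          (2 * ⟪x, v⟫ + 2 * t * ‖v‖ ^ 2) t := by
        have ha1 : HasDerivAt (fun s : ℝ => 2 * s * ⟪x, v⟫) (2 * ⟪x, v⟫) t := by
          simpa [mul_comm, mul_assoc] using
            ((hasDerivAt_id t).const_mul 2).mul_const ⟪x, v⟫
        have ha2 : HasDerivAt (fun s : ℝ => s ^ 2 * ‖v‖ ^ 2) (2 * t * ‖v‖ ^ 2) t := by
          have := (hasDerivAt_pow 2 t).mul_const (‖v‖ ^ 2)
          norm_num at this
          convert this using 1
          try ring
        simpa [Pi.add_def] using ((ha1.const_add (‖x‖ ^ 2)).add ha2)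
      have := this.const_mul (κ / 2)
      simpa [hq, mul_add] using this
    have := h1.sub h2
    simpa [hφ, hφ', Pi.sub_def] using this
  -- second derivative on the segment
  set f1 : E → (E →L[ℝ] ℝ) := fderiv ℝ h with hf1
  set f2 : E → (E →L[ℝ] (E →L[ℝ] ℝ)) := fderiv ℝ f1 with hf2
  have hd2 : ∀ t ∈ Icc (0:ℝ) 1, HasDerivAt φ' (f2 (L t) v v - κ * ‖v‖ ^ 2) t := by
    intro t ht
    have hmem : L t ∈ O := hUO (hseg t ht)
    have hCA : ContDiffAt ℝ 2 h (L t) := hC2.contDiffAt (hO.mem_nhds hmem)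
    have hCA1 : ContDiffAt ℝ 1 f1 (L t) := hCA.fderiv_right (by norm_num)
    have hdf1 : HasFDerivAt f1 (f2 (L t)) (L t) :=
      (hCA1.differentiableAt (by norm_num)).hasFDerivAt
    have h1 : HasDerivAt (fun s => f1 (L s)) (f2 (L t) v) t :=
      hdf1.comp_hasDerivAt t (hLd t)
    have h2 : HasDerivAt (fun s => f1 (L s) v) (f2 (L t) v v) t := by
      have := (ContinuousLinearMap.apply ℝ ℝ v).hasFDerivAt.comp_hasDerivAt t h1
      simpa [Function.comp_def] using this
    have h3 : HasDerivAt (fun s : ℝ => κ / 2 * (2 * ⟪x, v⟫ + 2 * s * ‖v‖ ^ 2))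
        (κ * ‖v‖ ^ 2) t := by
      have : HasDerivAt (fun s : ℝ => 2 * s * ‖v‖ ^ 2) (2 * ‖v‖ ^ 2) t := by
        simpa [mul_comm, mul_assoc] using ((hasDerivAt_id t).const_mul 2).mul_const (‖v‖ ^ 2)
      have := (this.const_add (2 * ⟪x, v⟫)).const_mul (κ / 2)
      rw [show κ * ‖v‖ ^ 2 = κ / 2 * (2 * ‖v‖ ^ 2) by ring]
      exact this
    simpa [hφ', Pi.sub_def] using h2.sub h3
  -- convexity of φ on [0,1]
  have hderiv_eq : ∀ t ∈ Icc (0:ℝ) 1, deriv φ t = φ' t := fun t ht => (hd1 t ht).deriv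
  have hφconv : ConvexOn ℝ (Icc (0:ℝ) 1) φ := by
    apply convexOn_of_deriv2_nonneg (convex_Icc 0 1)
    · intro t ht
      exact (hd1 t ht).continuousAt.continuousWithinAt
    · intro t ht
      rw [interior_Icc] at ht
      exact ((hd1 t (Ioo_subset_Icc_self ht)).differentiableAt).differentiableWithinAt
    · intro t ht
      rw [interior_Icc] at ht
      have heq : deriv φ =ᶠ[𝓝 t] φ' :=
        Filter.eventuallyEq_of_mem (isOpen_Ioo.mem_nhds ht)
          (fun s hs => hderiv_eq s (Ioo_subset_Icc_self hs))
      exact (((hd2 t (Ioo_subset_Icc_self ht)).differentiableAt).congr_of_eventuallyEq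
        heq).differentiableWithinAt
    · intro t ht
      rw [interior_Icc] at ht
      have heq : deriv φ =ᶠ[𝓝 t] φ' :=
        Filter.eventuallyEq_of_mem (isOpen_Ioo.mem_nhds ht)
          (fun s hs => hderiv_eq s (Ioo_subset_Icc_self hs))
      have : deriv (deriv φ) t = f2 (L t) v v - κ * ‖v‖ ^ 2 := by
        rw [heq.deriv_eq]
        exact (hd2 t (Ioo_subset_Icc_self ht)).deriv
      have hge : κ * ‖v‖ ^ 2 ≤ f2 (L t) v v :=
        hhess (L t) (hseg t (Ioo_subset_Icc_self ht)) v
      simp only [Function.iterate_succ, Function.iterate_zero, Function.comp_apply, id_eq]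
      rw [show deriv (deriv φ) t = _ from this] at *
      · linarith
  -- evaluate
  have h01 : (0:ℝ) ∈ Icc (0:ℝ) 1 := ⟨le_refl _, zero_le_one⟩
  have h11 : (1:ℝ) ∈ Icc (0:ℝ) 1 := ⟨zero_le_one, le_refl _⟩
  have := hφconv.2 h01 h11 ha hb hab
  have hL0 : L 0 = x := by simp [hL]
  have hL1 : L 1 = y := by simp [hL, hv]
  have hLb : L (a • (0:ℝ) + b • 1) = a • x + b • y := by
    have hb' : a • (0:ℝ) + b • 1 = b := by simp
    rw [hb', hL]
    simp only [hv]
    have : a = 1 - b := by linarith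
    rw [this]
    module
  simp only [hφ] at this
  rw [hL0, hL1, hLb] at this
  simpa [smul_eq_mul] using this

lemma aux_tendsto {E : Type*} [NormedAddCommGroup E] [NormedSpace ℝ E]
    (h : E → ℝ) (D : Set E)
    (hclosed : IsClosed {p : E × ℝ | p.1 ∈ D ∧ h p.1 ≤ p.2})
    (hconv : ConvexOn ℝ D h) (z : E) (hzD : z ∈ D) (p : E) (hp : p ∈ D) :
    Tendsto (fun t : ℝ => h (p + t • (z - p))) (𝓝[>] (0:ℝ)) (𝓝 (h p)) := by
  have hmemD : ∀ t ∈ Icc (0:ℝ) 1, p + t • (z - p) ∈ D := by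
    intro t ht
    exact hconv.1.add_smul_sub_mem hp hzD ht
  have hIoc : Ioc (0:ℝ) 1 ∈ 𝓝[>] (0:ℝ) := Ioc_mem_nhdsGT_of_mem ⟨le_refl _, zero_lt_one⟩
  have hub : ∀ t ∈ Ioc (0:ℝ) 1, h (p + t • (z - p)) ≤ (1 - t) * h p + t * h z := by
    intro t ht
    have hcombo : (1 - t) • p + t • z = p + t • (z - p) := by module
    have := hconv.2 hp hzD (by linarith [ht.2] : (0:ℝ) ≤ 1 - t) (le_of_lt ht.1)
      (by ring : (1 - t) + t = 1)
    rw [hcombo] at this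
    simpa [smul_eq_mul] using this
  rw [tendsto_order]
  constructor
  · -- lower bound: lower semicontinuity via closed epigraph
    intro c hc
    by_contra hcon
    rw [Filter.not_eventually] at hcon
    have hfreq : ∃ᶠ t in 𝓝[>] (0:ℝ), (p + t • (z - p), c) ∈
        {q : E × ℝ | q.1 ∈ D ∧ h q.1 ≤ q.2} := by
      refine (hcon.and_eventually (eventually_of_mem hIoc fun t ht => ht)).mono ?_
      rintro t ⟨hle, htIoc⟩
      exact ⟨hmemD t (Ioc_subset_Icc_self htIoc), not_lt.1 hle⟩
    have hT : IsClosed {t : ℝ | (p + t • (z - p), c) ∈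
        {q : E × ℝ | q.1 ∈ D ∧ h q.1 ≤ q.2}} := by
      apply IsClosed.preimage _ hclosed
      fun_prop
    have h0 : (0:ℝ) ∈ {t : ℝ | (p + t • (z - p), c) ∈
        {q : E × ℝ | q.1 ∈ D ∧ h q.1 ≤ q.2}} := by
      rw [← hT.closure_eq]
      exact mem_closure_iff_frequently.2 (hfreq.filter_mono nhdsWithin_le_nhds)
    simp only [mem_setOf_eq, zero_smul, add_zero] at h0
    exact absurd h0.2 (not_le.2 hc)
  · -- upper bound via convexity
    intro c hc
    have hcont : Tendsto (fun t : ℝ => (1 - t) * h p + t * h z) (𝓝[>] (0:ℝ))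
        (𝓝 (h p)) := by
      have : Tendsto (fun t : ℝ => (1 - t) * h p + t * h z) (𝓝 (0:ℝ))
          (𝓝 ((1 - 0) * h p + 0 * h z)) :=
        Continuous.tendsto (by continuity) 0
      simpa using this.mono_left nhdsWithin_le_nhds
    have hev : ∀ᶠ t in 𝓝[>] (0:ℝ), (1 - t) * h p + t * h z < c :=
      hcont.eventually_lt_const hc
    filter_upwards [hev, hIoc] with t h1 h2
    exact lt_of_le_of_lt (hub t h2) h1


/-- Sufficient condition for strong convexity on a convex compact `S ⊆ dom h`:
if the Hessian of `h` is uniformly positive definite (with constant `κ`) on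
`conv(S ∪ {z}) ∩ int dom h` for some `z ∈ int dom h`, then `h` is `κ`-strongly
convex on `S`. -/
theorem stmt5 (n : ℕ) (h : EuclideanSpace ℝ (Fin n) → ℝ)
    (D : Set (EuclideanSpace ℝ (Fin n)))
    (hclosed : IsClosed {p : EuclideanSpace ℝ (Fin n) × ℝ | p.1 ∈ D ∧ h p.1 ≤ p.2})
    (hconv : ConvexOn ℝ D h)
    (hDint : (interior D).Nonempty)
    (hC2 : ContDiffOn ℝ 2 h (interior D))
    (S : Set (EuclideanSpace ℝ (Fin n)))
    (hSD : S ⊆ D) (hSne : S.Nonempty) (hSconv : Convex ℝ S) (hScomp : IsCompact S)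
    (z : EuclideanSpace ℝ (Fin n)) (hz : z ∈ interior D)
    (κ : ℝ) (hκ : 0 < κ)
    (hhess : ∀ x ∈ convexHull ℝ (S ∪ {z}) ∩ interior D,
      ∀ v : EuclideanSpace ℝ (Fin n),
        κ * ‖v‖ ^ 2 ≤ iteratedFDerivWithin ℝ 2 h (interior D) x ![v, v]) :
    StrongConvexOn S κ h := by
  set U : Set (EuclideanSpace ℝ (Fin n)) := convexHull ℝ (S ∪ {z}) ∩ interior D with hU
  have hzD : z ∈ D := interior_subset hz
  -- Hessian bound in terms of the full second derivative
  have hhess' : ∀ x ∈ U, ∀ v : EuclideanSpace ℝ (Fin n), κ * ‖v‖ ^ 2 ≤ fderiv ℝ (fderiv ℝ h) x v v := by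
    intro x hx v
    have hxi : x ∈ interior D := hx.2
    have := hhess x hx v
    rw [iteratedFDerivWithin_of_isOpen (f := h) 2 isOpen_interior hxi,
      iteratedFDeriv_two_apply] at this
    simpa using this
  -- convexity of the shifted function on U
  have hUconv : Convex ℝ U :=
    (convex_convexHull ℝ (S ∪ {z})).inter hconv.1.interior
  have gconv : ConvexOn ℝ U (fun x => h x - κ / 2 * ‖x‖ ^ 2) :=
    aux_convexOn h (interior D) isOpen_interior hC2 U hUconv inter_subset_right κ hhess'
  -- limits along segments toward z
  have gg : ∀ p ∈ S, Tendsto (fun t : ℝ => h (p + t • (z - p)) - κ / 2 * ‖p + t • (z - p)‖ ^ 2)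
      (𝓝[>] (0:ℝ)) (𝓝 (h p - κ / 2 * ‖p‖ ^ 2)) := by
    intro p hp
    have hnorm : Tendsto (fun t : ℝ => κ / 2 * ‖p + t • (z - p)‖ ^ 2) (𝓝[>] (0:ℝ))
        (𝓝 (κ / 2 * ‖p‖ ^ 2)) := by
      have hcont : Continuous fun t : ℝ => κ / 2 * ‖p + t • (z - p)‖ ^ 2 := by continuity
      have := (hcont.tendsto 0).mono_left (nhdsWithin_le_nhds (s := Ioi (0:ℝ)))
      simpa using this
    exact (aux_tendsto h D hclosed hconv z hzD p (hSD hp)).sub hnorm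
  -- segment points are in U
  have hmemU : ∀ p ∈ S, ∀ t ∈ Ioc (0:ℝ) 1, p + t • (z - p) ∈ U := by
    intro p hp t ht
    constructor
    · have hcombo : (1 - t) • p + t • z = p + t • (z - p) := by module
      rw [← hcombo]
      exact (convex_convexHull ℝ (S ∪ {z}))
        (subset_convexHull ℝ _ (Or.inl hp)) (subset_convexHull ℝ _ (Or.inr rfl))
        (by linarith [ht.2]) (le_of_lt ht.1) (by ring)
    · exact hconv.1.add_smul_sub_mem_interior (hSD hp) hz ht
  -- convexity of the shifted function on S by passing to the limit
  have hSg : ConvexOn ℝ S (fun x => h x - κ / 2 * ‖x‖ ^ 2) := by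
    refine ⟨hSconv, ?_⟩
    intro x hx y hy a b ha hb hab
    have hab' : a = 1 - b := by linarith
    subst hab'
    set m : EuclideanSpace ℝ (Fin n) := (1 - b) • x + b • y with hm
    have hmS : m ∈ S := by
      rw [hm]
      exact hSconv hx hy (a := 1 - b) (b := b) (by linarith) hb (by ring)
    have hcombo : ∀ t : ℝ, (1 - b) • (x + t • (z - x)) + b • (y + t • (z - y))
        = m + t • (z - m) := by
      intro t
      rw [hm]
      module
    have hIoc : Ioc (0:ℝ) 1 ∈ 𝓝[>] (0:ℝ) := Ioc_mem_nhdsGT_of_mem ⟨le_refl _, zero_lt_one⟩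
    have hineq : ∀ᶠ t in 𝓝[>] (0:ℝ),
        h (m + t • (z - m)) - κ / 2 * ‖m + t • (z - m)‖ ^ 2 ≤
          (1 - b) * (h (x + t • (z - x)) - κ / 2 * ‖x + t • (z - x)‖ ^ 2) +
          b * (h (y + t • (z - y)) - κ / 2 * ‖y + t • (z - y)‖ ^ 2) := by
      filter_upwards [hIoc] with t ht
      have := gconv.2 (hmemU x hx t ht) (hmemU y hy t ht)
        (show (0:ℝ) ≤ 1 - b by linarith) hb (show (1 - b) + b = 1 by ring)
      rw [hcombo t] at this
      simpa [smul_eq_mul] using this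
    have hF := gg m hmS
    have hG := (((gg x hx).const_mul (1 - b)).add ((gg y hy).const_mul b))
    have := le_of_tendsto_of_tendsto hF hG hineq
    simpa [smul_eq_mul, hm] using this
  rw [strongConvexOn_iff_convex]
  exact hSg
end

section
/- Let h(x) = ∑_{i=1}^n (x_i ln x_i - x_i) on the nonnegative orthant (with 0 ln 0 := 0, and +∞ elsewhere). Then for every nonempty convex compact set S contained in the nonnegative orthant, h is strongly convex on S with a positive modulus. -/
open Real Set

/-- One-dimensional key lemma: `t ↦ t log t - t - c/2 t²` is convex on `[0, 1/c]`. -/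
lemma entropy_aux (c : ℝ) (hc : 0 < c) :
    ConvexOn ℝ (Set.Icc (0:ℝ) (1/c))
      (fun t : ℝ => t * Real.log t - t - c/2 * t^2) := by
  have hint : interior (Set.Icc (0:ℝ) (1/c)) = Set.Ioo 0 (1/c) := interior_Icc
  refine convexOn_of_deriv2_nonneg (convex_Icc _ _) ?_ ?_ ?_ ?_
  · apply ContinuousOn.sub
    apply ContinuousOn.sub
    · exact Real.continuous_mul_log.continuousOn
    · exact continuousOn_id
    · exact (continuous_const.mul (continuous_pow 2)).continuousOn
  · rw [hint]
    intro t ht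
    have ht0 : t ≠ 0 := ne_of_gt ht.1
    apply DifferentiableAt.differentiableWithinAt
    exact (((differentiableAt_id.mul (Real.differentiableAt_log ht0)).sub
      differentiableAt_id).sub ((differentiableAt_const _).mul (differentiableAt_pow 2)))
  all_goals {
    rw [hint]
    have hderiv : ∀ t ∈ Set.Ioo (0:ℝ) (1/c),
        deriv (fun t : ℝ => t * Real.log t - t - c/2 * t^2) t = Real.log t - c * t := by
      intro t ht
      have ht0 : t ≠ 0 := ne_of_gt ht.1
      have h1 : HasDerivAt (fun t : ℝ => t * Real.log t) (Real.log t + 1) t :=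
        Real.hasDerivAt_mul_log ht0
      have h2 : HasDerivAt (fun t : ℝ => c/2 * t^2) (c * t) t := by
        have := (hasDerivAt_pow 2 t).const_mul (c/2)
        rw [show c / 2 * ((↑(2:ℕ):ℝ) * t ^ (2 - 1)) = c * t by
          simp only [Nat.cast_ofNat, Nat.reduceSub, pow_one]; ring] at this
        exact this
      have := (h1.sub (hasDerivAt_id' (x := t))).sub h2
      have heq : deriv (fun t : ℝ => t * Real.log t - t - c/2 * t^2) t = _ := this.deriv
      rw [heq]; ring
    have heq : Set.EqOn (deriv (fun t : ℝ => t * Real.log t - t - c/2 * t^2))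
        (fun t => Real.log t - c * t) (Set.Ioo 0 (1/c)) := hderiv
    first
    | { -- DifferentiableOn of deriv
        rw [differentiableOn_congr heq]
        intro t ht
        exact (((Real.differentiableAt_log (ne_of_gt ht.1)).sub
          ((differentiableAt_const c).mul differentiableAt_id)).differentiableWithinAt) }
    | { -- second derivative nonneg
        intro t ht
        have ht0 : 0 < t := ht.1
        have hev : ∀ᶠ y in nhds t, deriv (fun t : ℝ => t * Real.log t - t - c/2 * t^2) y
            = Real.log y - c * y := by
          filter_upwards [(isOpen_Ioo.mem_nhds ht)] with y hy using hderiv y hy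
        have : deriv^[2] (fun t : ℝ => t * Real.log t - t - c/2 * t^2) t
            = deriv (fun y => Real.log y - c * y) t := by
          simp only [Function.iterate_succ, Function.iterate_zero, Function.id_comp,
            Function.comp_apply]
          exact Filter.EventuallyEq.deriv_eq hev
        rw [this]
        have h3 : HasDerivAt (fun y : ℝ => Real.log y - c * y) (1/t - c) t := by
          have : HasDerivAt (fun y : ℝ => Real.log y - c * y) (t⁻¹ - c * 1) t := (Real.hasDerivAt_log (ne_of_gt ht0)).sub
            ((hasDerivAt_id' (x := t)).const_mul c)
          simpa [one_div, mul_one] using this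
        rw [h3.deriv]
        have htlt : t < 1/c := ht.2
        have : c ≤ 1/t := by
          rw [le_div_iff₀ ht0]
          have := (lt_div_iff₀ hc).mp htlt
          linarith
        linarith }
  }

/-- The entropy `h(x) = ∑ (xᵢ ln xᵢ - xᵢ)` (with `0 ln 0 = 0`) is strongly convex with
positive modulus on every nonempty convex compact subset of the nonnegative orthant. -/
theorem stmt8 (n : ℕ) (S : Set (EuclideanSpace ℝ (Fin n)))
    (hS : S ⊆ {x : EuclideanSpace ℝ (Fin n) | ∀ i, 0 ≤ x i})
    (hne : S.Nonempty) (hconv : Convex ℝ S) (hcomp : IsCompact S) :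
    ∃ μ : ℝ, 0 < μ ∧
      StrongConvexOn S μ
        (fun x : EuclideanSpace ℝ (Fin n) => ∑ i, (x i * Real.log (x i) - x i)) := by
  obtain ⟨R, hR⟩ := hcomp.isBounded.exists_norm_le
  set M : ℝ := max R 0 with hM
  have hM0 : 0 ≤ M := le_max_right _ _
  set c : ℝ := 1 / (M + 1) with hc
  have hcpos : 0 < c := by positivity
  have hinv : 1 / c = M + 1 := by
    rw [hc, one_div_one_div]
  -- each coordinate of a point of S lies in [0, M+1]
  have hcoord : ∀ x ∈ S, ∀ i, x i ∈ Set.Icc (0:ℝ) (M + 1) := by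
    intro x hx i
    refine ⟨hS hx i, ?_⟩
    have h1 : |x i| ≤ ‖x‖ := by
      have : ‖x‖ = Real.sqrt (∑ j, ‖x j‖ ^ 2) := EuclideanSpace.norm_eq x
      rw [this]
      have h2 : |x i| = Real.sqrt (‖x i‖^2) := by
        rw [Real.sqrt_sq_eq_abs, Real.norm_eq_abs, abs_abs]
      rw [h2]
      apply Real.sqrt_le_sqrt
      exact Finset.single_le_sum (f := fun j => ‖x j‖^2) (fun j _ => sq_nonneg _) (Finset.mem_univ i)
    have := le_abs_self (x i)
    have hxR := hR x hx
    have : x i ≤ M := le_trans this (h1.trans (hxR.trans (le_max_left _ _)))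
    linarith
  refine ⟨c, hcpos, ?_⟩
  rw [strongConvexOn_iff_convex]
  have hg := entropy_aux c hcpos
  rw [hinv] at hg
  -- rewrite the function as a sum of coordinatewise convex functions
  have hfun : ∀ x : EuclideanSpace ℝ (Fin n),
      (∑ i, (x i * Real.log (x i) - x i)) - c / 2 * ‖x‖ ^ 2
        = ∑ i, (x i * Real.log (x i) - x i - c/2 * (x i)^2) := by
    intro x
    have hnorm : ‖x‖ ^ 2 = ∑ i, (x i)^2 := by
      rw [EuclideanSpace.norm_eq]
      rw [Real.sq_sqrt (Finset.sum_nonneg fun i _ => sq_nonneg _)]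
      simp [Real.norm_eq_abs, sq_abs]
    rw [hnorm, Finset.mul_sum, ← Finset.sum_sub_distrib]
  refine ConvexOn.congr ?_ (fun x _ => (hfun x).symm)
  -- prove convexity of the sum directly
  refine ⟨hconv, fun x hx y hy a b ha hb hab => ?_⟩
  have key : ∀ i : Fin n,
      ((a • x + b • y) i * Real.log ((a • x + b • y) i) - (a • x + b • y) i
        - c/2 * ((a • x + b • y) i)^2)
      ≤ a * (x i * Real.log (x i) - x i - c/2 * (x i)^2)
        + b * (y i * Real.log (y i) - y i - c/2 * (y i)^2) := by
    intro i
    have hxi := hcoord x hx i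
    have hyi := hcoord y hy i
    have hcv := hg.2 hxi hyi ha hb hab
    have hco : (a • x + b • y) i = a * x i + b * y i := by
      simp [PiLp.add_apply, PiLp.smul_apply, smul_eq_mul]
    rw [hco]
    simpa [smul_eq_mul] using hcv
  calc ∑ i, ((a • x + b • y) i * Real.log ((a • x + b • y) i) - (a • x + b • y) i
        - c/2 * ((a • x + b • y) i)^2)
      ≤ ∑ i, (a * (x i * Real.log (x i) - x i - c/2 * (x i)^2)
        + b * (y i * Real.log (y i) - y i - c/2 * (y i)^2)) :=
        Finset.sum_le_sum fun i _ => key i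
    _ = a • (∑ i, (x i * Real.log (x i) - x i - c/2 * (x i)^2))
        + b • (∑ i, (y i * Real.log (y i) - y i - c/2 * (y i)^2)) := by
        rw [Finset.sum_add_distrib, ← Finset.mul_sum, ← Finset.mul_sum]
        simp [smul_eq_mul]
end

section
/- Let A ≥ 0, k₀ ≥ 0 be given, let τ_k = 2/(k+2) for k ≥ k₀, and let (a_k), (b_k) be nonnegative sequences satisfying a_k ≤ b_k and a_{k+1} ≤ a_k - τ_k b_k + (A/2)τ_k² for all k ≥ k₀. Then for all k ≥ k₀ + 1: a_k ≤ (k₀(k₀+1)a_{k₀} + 2A(k - k₀)) / (k(k+1)). -/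
/-- Recursion lemma, part (a): with `τ_k = 2/(k+2)`, nonnegative sequences satisfying
`a_k ≤ b_k` and `a_{k+1} ≤ a_k - τ_k b_k + (A/2)τ_k²` for `k ≥ k₀` satisfy
`a_k ≤ (k₀(k₀+1)a_{k₀} + 2A(k-k₀))/(k(k+1))` for all `k ≥ k₀+1`. -/
theorem stmt11 (A : ℝ) (hA : 0 ≤ A) (k₀ : ℕ) (a b : ℕ → ℝ)
    (ha : ∀ k, k₀ ≤ k → 0 ≤ a k) (hb : ∀ k, k₀ ≤ k → 0 ≤ b k)
    (hab : ∀ k, k₀ ≤ k → a k ≤ b k)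
    (hrec : ∀ k, k₀ ≤ k →
      a (k + 1) ≤ a k - (2 / ((k : ℝ) + 2)) * b k + (A / 2) * (2 / ((k : ℝ) + 2)) ^ 2) :
    ∀ k, k₀ + 1 ≤ k →
      a k ≤ ((k₀ : ℝ) * ((k₀ : ℝ) + 1) * a k₀ + 2 * A * ((k : ℝ) - (k₀ : ℝ))) /
        ((k : ℝ) * ((k : ℝ) + 1)) := by
  -- key step: (m+1)(m+2) a(m+1) ≤ m(m+1) a m + 2A for m ≥ k₀
  have key : ∀ m, k₀ ≤ m →
      ((m : ℝ) + 1) * ((m : ℝ) + 2) * a (m + 1) ≤ (m : ℝ) * ((m : ℝ) + 1) * a m + 2 * A := by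
    intro m hm
    have hm2 : (0 : ℝ) < (m : ℝ) + 2 := by positivity
    have h1 : a (m + 1) ≤ ((m : ℝ) / ((m : ℝ) + 2)) * a m + 2 * A / ((m : ℝ) + 2) ^ 2 := by
      have h2 := hrec m hm
      have h3 : (2 / ((m : ℝ) + 2)) * a m ≤ (2 / ((m : ℝ) + 2)) * b m := by
        apply mul_le_mul_of_nonneg_left (hab m hm) (by positivity)
      have := h2.trans (by linarith : a m - (2 / ((m : ℝ) + 2)) * b m +
        (A / 2) * (2 / ((m : ℝ) + 2)) ^ 2 ≤ a m - (2 / ((m : ℝ) + 2)) * a m +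
        (A / 2) * (2 / ((m : ℝ) + 2)) ^ 2)
      have heq : a m - (2 / ((m : ℝ) + 2)) * a m + (A / 2) * (2 / ((m : ℝ) + 2)) ^ 2
          = ((m : ℝ) / ((m : ℝ) + 2)) * a m + 2 * A / ((m : ℝ) + 2) ^ 2 := by
        field_simp; ring
      linarith [heq ▸ this]
    have h4 : ((m : ℝ) + 1) * ((m : ℝ) + 2) * a (m + 1)
        ≤ ((m : ℝ) + 1) * ((m : ℝ) + 2) * (((m : ℝ) / ((m : ℝ) + 2)) * a m
          + 2 * A / ((m : ℝ) + 2) ^ 2) := by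
      apply mul_le_mul_of_nonneg_left h1 (by positivity)
    have heq2 : ((m : ℝ) + 1) * ((m : ℝ) + 2) * (((m : ℝ) / ((m : ℝ) + 2)) * a m
        + 2 * A / ((m : ℝ) + 2) ^ 2)
        = (m : ℝ) * ((m : ℝ) + 1) * a m + 2 * A * (((m : ℝ) + 1) / ((m : ℝ) + 2)) := by
      field_simp
    have h5 : 2 * A * (((m : ℝ) + 1) / ((m : ℝ) + 2)) ≤ 2 * A := by
      have : ((m : ℝ) + 1) / ((m : ℝ) + 2) ≤ 1 := by
        rw [div_le_one hm2]; linarith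
      nlinarith
    linarith [heq2 ▸ h4]
  -- induction claim
  have main : ∀ k, k₀ + 1 ≤ k →
      (k : ℝ) * ((k : ℝ) + 1) * a k ≤ (k₀ : ℝ) * ((k₀ : ℝ) + 1) * a k₀
        + 2 * A * ((k : ℝ) - (k₀ : ℝ)) := by
    intro k hk
    induction k, hk using Nat.le_induction with
    | base =>
      have := key k₀ le_rfl
      push_cast
      push_cast at this
      linarith
    | succ n hn ih =>
      have hkey := key n (by omega)
      push_cast
      push_cast at hkey ih
      linarith
  intro k hk
  have hkpos : (0 : ℝ) < (k : ℝ) * ((k : ℝ) + 1) := by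
    have : (1 : ℝ) ≤ (k : ℝ) := by exact_mod_cast Nat.one_le_iff_ne_zero.mpr (by omega)
    nlinarith
  rw [le_div_iff₀ hkpos]
  have := main k hk
  linarith
end

section
/- Let h : ℝⁿ → ℝ ∪ {+∞} be proper, closed, convex, and strictly convex on dom h. Then dom h* is open if and only if h is affine attaining, i.e., for every u ∈ ℝⁿ such that x ↦ h(x) - ⟨u,x⟩ is bounded below, this function attains its minimum on ℝⁿ. -/
open Filter Topology Set

set_option maxHeartbeats 1000000 in
/-- For a proper, closed, convex function `h` (with domain `D`) that is strictly convex
on `D`, `dom h*` is open if and only if `h` is affine attaining: whenever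
`x ↦ h x - ⟨u,x⟩` is bounded below (on `D`), it attains its minimum. -/
theorem stmt18 (n : ℕ) (h : EuclideanSpace ℝ (Fin n) → ℝ)
    (D : Set (EuclideanSpace ℝ (Fin n)))
    (hproper : D.Nonempty)
    (hclosed : IsClosed {p : EuclideanSpace ℝ (Fin n) × ℝ | p.1 ∈ D ∧ h p.1 ≤ p.2})
    (hconv : ConvexOn ℝ D h)
    (hstrict : StrictConvexOn ℝ D h) :
    IsOpen {u : EuclideanSpace ℝ (Fin n) |
        BddAbove ((fun x => (inner ℝ u x : ℝ) - h x) '' D)} ↔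
      ∀ u : EuclideanSpace ℝ (Fin n),
        BddBelow ((fun x => h x - (inner ℝ u x : ℝ)) '' D) →
        ∃ x ∈ D, ∀ y ∈ D, h x - (inner ℝ u x : ℝ) ≤ h y - (inner ℝ u y : ℝ) := by
  classical
  set S : Set (EuclideanSpace ℝ (Fin n)) :=
    {u | BddAbove ((fun x => (inner ℝ u x : ℝ) - h x) '' D)} with hSdef
  -- duality between the two boundedness notions
  have bdd_iff : ∀ u : EuclideanSpace ℝ (Fin n),
      u ∈ S ↔ BddBelow ((fun x => h x - (inner ℝ u x : ℝ)) '' D) := by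
    intro u
    constructor
    · rintro ⟨M, hM⟩
      refine ⟨-M, ?_⟩
      rintro _ ⟨x, hx, rfl⟩
      have := hM (Set.mem_image_of_mem _ hx)
      simp only at this ⊢
      linarith
    · rintro ⟨M, hM⟩
      refine ⟨-M, ?_⟩
      rintro _ ⟨x, hx, rfl⟩
      have := hM (Set.mem_image_of_mem _ hx)
      simp only at this ⊢
      linarith
  -- convexity of S
  have Sconv : Convex ℝ S := by
    rintro u₁ hu₁ u₂ hu₂ a b ha hb hab
    obtain ⟨M₁, hM₁⟩ := hu₁
    obtain ⟨M₂, hM₂⟩ := hu₂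
    refine ⟨a * M₁ + b * M₂, ?_⟩
    rintro _ ⟨x, hx, rfl⟩
    have h₁ := hM₁ (Set.mem_image_of_mem _ hx)
    have h₂ := hM₂ (Set.mem_image_of_mem _ hx)
    simp only at h₁ h₂ ⊢
    have hinner : (inner ℝ (a • u₁ + b • u₂) x : ℝ)
        = a * (inner ℝ u₁ x : ℝ) + b * (inner ℝ u₂ x : ℝ) := by
      rw [inner_add_left, real_inner_smul_left, real_inner_smul_left]
    rw [hinner]
    have hh : a * h x + b * h x = h x := by rw [← add_mul, hab, one_mul]
    nlinarith [mul_le_mul_of_nonneg_left h₁ ha, mul_le_mul_of_nonneg_left h₂ hb]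
  -- closed epigraph limit lemma
  have epi_lim : ∀ (z : ℕ → EuclideanSpace ℝ (Fin n)) (c : ℕ → ℝ)
      (z' : EuclideanSpace ℝ (Fin n)) (c' : ℝ),
      (∀ k, z k ∈ D) → (∀ k, h (z k) ≤ c k) →
      Tendsto z atTop (𝓝 z') → Tendsto c atTop (𝓝 c') →
      z' ∈ D ∧ h z' ≤ c' := by
    intro z c z' c' hzD hzc hz hc
    exact hclosed.mem_of_tendsto (hz.prodMk_nhds hc)
      (Filter.Eventually.of_forall fun k => ⟨hzD k, hzc k⟩)
  -- convexity of the tilted function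
  have gconv : ∀ (u x y : EuclideanSpace ℝ (Fin n)), x ∈ D → y ∈ D →
      ∀ a b : ℝ, 0 ≤ a → 0 ≤ b → a + b = 1 →
      h (a • x + b • y) - (inner ℝ u (a • x + b • y) : ℝ)
        ≤ a * (h x - (inner ℝ u x : ℝ)) + b * (h y - (inner ℝ u y : ℝ)) := by
    intro u x y hx hy a b ha hb hab
    have h1 := hconv.2 hx hy ha hb hab
    have h2 : (inner ℝ u (a • x + b • y) : ℝ)
        = a * (inner ℝ u x : ℝ) + b * (inner ℝ u y : ℝ) := by
      rw [inner_add_right, real_inner_smul_right, real_inner_smul_right]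
    rw [h2]
    simp only [smul_eq_mul] at h1
    linarith
  constructor
  · -- open → attaining
    intro hopen u hub
    have huS : u ∈ S := (bdd_iff u).2 hub
    obtain ⟨ε, εpos, hball⟩ := Metric.isOpen_iff.1 hopen u huS
    set m := sInf ((fun x => h x - (inner ℝ u x : ℝ)) '' D) with hm
    have himg_ne : ((fun x => h x - (inner ℝ u x : ℝ)) '' D).Nonempty := hproper.image _
    have hmle : ∀ y ∈ D, m ≤ h y - (inner ℝ u y : ℝ) := fun y hy =>
      csInf_le hub (Set.mem_image_of_mem _ hy)
    -- coercivity: the sublevel set at level m+1 is bounded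
    have coercive : ∃ B : ℝ, ∀ p ∈ D, h p - (inner ℝ u p : ℝ) ≤ m + 1 → ‖p‖ ≤ B := by
      by_contra hcon
      push_neg at hcon
      obtain ⟨q, hqD⟩ := hproper
      have hsel : ∀ j : ℕ, ∃ p, p ∈ D ∧ h p - (inner ℝ u p : ℝ) ≤ m + 1 ∧
          (j : ℝ) + ‖q‖ + 1 < ‖p‖ := by
        intro j
        obtain ⟨p, hpD, hple, hpn⟩ := hcon ((j : ℝ) + ‖q‖ + 1)
        exact ⟨p, hpD, hple, hpn⟩
      choose p hpD hple hpn using hsel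
      set d : ℕ → ℝ := fun j => ‖p j - q‖ with hd
      have hdpos : ∀ j : ℕ, (j : ℝ) + 1 ≤ d j := by
        intro j
        have := norm_sub_norm_le (p j) q
        have hj := hpn j
        simp only [hd]
        linarith [norm_sub_norm_le (p j) q]
      have hd0 : ∀ j, 0 < d j := fun j => lt_of_lt_of_le (by positivity) (hdpos j)
      set w : ℕ → EuclideanSpace ℝ (Fin n) := fun j => (d j)⁻¹ • (p j - q) with hw
      have hwnorm : ∀ j, ‖w j‖ = 1 := by
        intro j
        rw [show w j = (d j)⁻¹ • (p j - q) from rfl, norm_smul, Real.norm_eq_abs,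
          abs_of_pos (inv_pos.2 (hd0 j))]
        exact inv_mul_cancel₀ (hd0 j).ne'
      have hwball : ∀ j, w j ∈ Metric.closedBall (0 : EuclideanSpace ℝ (Fin n)) 1 := by
        intro j
        simp [Metric.mem_closedBall, hwnorm j]
      obtain ⟨w', hw'ball, φ, hφmono, hφtend⟩ :=
        (isCompact_closedBall (0 : EuclideanSpace ℝ (Fin n)) 1).tendsto_subseq hwball
      have hw'norm : ‖w'‖ = 1 := by
        have h1 : Tendsto (fun j => ‖w (φ j)‖) atTop (𝓝 ‖w'‖) := hφtend.norm
        have h2 : (fun j => ‖w (φ j)‖) = fun _ => (1 : ℝ) := funext fun j => hwnorm (φ j)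
        rw [h2] at h1
        exact tendsto_nhds_unique h1 tendsto_const_nhds
      -- u + (ε/2) • w' ∈ S
      have hmem : u + (ε / 2) • w' ∈ S := by
        apply hball
        rw [Metric.mem_ball, dist_eq_norm, add_sub_cancel_left, norm_smul,
          Real.norm_eq_abs, abs_of_pos (by positivity), hw'norm]
        linarith
      obtain ⟨M, hM⟩ := hmem
      have hptw : ∀ j, (ε / 2) * (inner ℝ w' (p j) : ℝ) ≤ M + m + 1 := by
        intro j
        have := hM (Set.mem_image_of_mem _ (hpD j))
        have hin : (inner ℝ (u + (ε / 2) • w') (p j) : ℝ)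
            = (inner ℝ u (p j) : ℝ) + (ε / 2) * (inner ℝ w' (p j) : ℝ) := by
          rw [inner_add_left, real_inner_smul_left]
        rw [hin] at this
        have := hple j
        linarith
      -- inner w' (p j) grows without bound along the subsequence
      have hinner_tend : Tendsto (fun j => (inner ℝ w' (w (φ j)) : ℝ)) atTop
          (𝓝 (inner ℝ w' w' : ℝ)) := Filter.Tendsto.inner tendsto_const_nhds hφtend
      have hww : (inner ℝ w' w' : ℝ) = 1 := by
        rw [real_inner_self_eq_norm_sq, hw'norm]; norm_num
      rw [hww] at hinner_tend
      have hev : ∀ᶠ j in atTop, (1 : ℝ) / 2 < (inner ℝ w' (w (φ j)) : ℝ) :=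
        hinner_tend.eventually (eventually_gt_nhds (by norm_num))
      obtain ⟨N, hN⟩ := eventually_atTop.1 hev
      -- pick a large index
      obtain ⟨j₁, hj₁⟩ := exists_nat_gt ((4 * (M + m + 1) - 2 * (inner ℝ w' q : ℝ) * ε) / ε)
      set j := max N j₁ with hj
      have hjN : N ≤ j := le_max_left _ _
      have hjj₁ : (j₁ : ℝ) ≤ (j : ℝ) := by exact_mod_cast le_max_right _ _
      have hc := hN j hjN
      have hdj : (j : ℝ) + 1 ≤ d (φ j) := by
        have h1 : ((j : ℕ) : ℝ) ≤ ((φ j : ℕ) : ℝ) := Nat.cast_le.2 hφmono.le_apply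
        linarith [hdpos (φ j)]
      -- inner w' (p (φ j)) = inner w' q + d * inner w' (w (φ j))
      have hdecomp : (inner ℝ w' (p (φ j)) : ℝ)
          = (inner ℝ w' q : ℝ) + d (φ j) * (inner ℝ w' (w (φ j)) : ℝ) := by
        have : p (φ j) - q = d (φ j) • w (φ j) := by
          simp only [hw]
          rw [smul_inv_smul₀ (hd0 (φ j)).ne']
        have h2 : (inner ℝ w' (p (φ j) - q) : ℝ) = d (φ j) * (inner ℝ w' (w (φ j)) : ℝ) := by
          rw [this, real_inner_smul_right]
        rw [inner_sub_right] at h2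
        linarith
      have hkey := hptw (φ j)
      rw [hdecomp] at hkey
      -- now derive contradiction
      have hd2 : (j : ℝ) + 1 ≤ d (φ j) := hdj
      have hdpos' : (0 : ℝ) < d (φ j) := hd0 (φ j)
      have h5 : d (φ j) * ((1:ℝ)/2) ≤ d (φ j) * (inner ℝ w' (w (φ j)) : ℝ) :=
        mul_le_mul_of_nonneg_left hc.le hdpos'.le
      have h6 : 4 * (M + m + 1) - 2 * (inner ℝ w' q : ℝ) * ε < ε * (j₁ : ℝ) := by
        rw [div_lt_iff₀ εpos] at hj₁
        linarith [hj₁]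
      nlinarith [mul_le_mul_of_nonneg_left hjj₁ εpos.le,
        mul_le_mul_of_nonneg_left hd2 (by linarith : (0:ℝ) ≤ ε/4),
        mul_le_mul_of_nonneg_left h5 (by linarith : (0:ℝ) ≤ ε/2)]
    obtain ⟨B, hB⟩ := coercive
    -- minimizing sequence
    have hseq : ∀ k : ℕ, ∃ x ∈ D, h x - (inner ℝ u x : ℝ) < m + 1 / ((k : ℝ) + 1) := by
      intro k
      have hpos : (0 : ℝ) < 1 / ((k : ℝ) + 1) := by positivity
      obtain ⟨y, hy, hylt⟩ := exists_lt_of_csInf_lt himg_ne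
        (show m < m + 1 / ((k : ℝ) + 1) by linarith)
      obtain ⟨x, hxD, rfl⟩ := hy
      exact ⟨x, hxD, hylt⟩
    choose x hxD hxlt using hseq
    have hxball : ∀ k, x k ∈ Metric.closedBall (0 : EuclideanSpace ℝ (Fin n)) B := by
      intro k
      have h1 : 1 / ((k : ℝ) + 1) ≤ 1 := by
        rw [div_le_one (by positivity)]
        have : (0:ℝ) ≤ (k:ℝ) := Nat.cast_nonneg k
        linarith
      have := hB (x k) (hxD k) (by linarith [hxlt k])
      simpa [Metric.mem_closedBall, dist_eq_norm] using this
    obtain ⟨a, _, φ, hφmono, hφtend⟩ :=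
      (isCompact_closedBall (0 : EuclideanSpace ℝ (Fin n)) B).tendsto_subseq hxball
    have hφatTop : Tendsto φ atTop atTop := hφmono.tendsto_atTop
    have hctend : Tendsto (fun k => m + 1 / ((φ k : ℝ) + 1) + (inner ℝ u (x (φ k)) : ℝ))
        atTop (𝓝 (m + (inner ℝ u a : ℝ))) := by
      have h1 : Tendsto (fun k => 1 / ((φ k : ℝ) + 1)) atTop (𝓝 0) :=
        tendsto_one_div_add_atTop_nhds_zero_nat.comp hφatTop
      have h2 : Tendsto (fun k => (inner ℝ u (x (φ k)) : ℝ)) atTop (𝓝 (inner ℝ u a : ℝ)) :=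
        Filter.Tendsto.inner tendsto_const_nhds hφtend
      have := (tendsto_const_nhds (x := m) (f := atTop (α := ℕ))).add h1 |>.add h2
      simpa using this
    obtain ⟨haD, hale⟩ := epi_lim (fun k => x (φ k))
      (fun k => m + 1 / ((φ k : ℝ) + 1) + (inner ℝ u (x (φ k)) : ℝ)) a (m + (inner ℝ u a : ℝ))
      (fun k => hxD (φ k)) (fun k => by linarith [hxlt (φ k)]) hφtend hctend
    refine ⟨a, haD, fun y hy => ?_⟩
    have := hmle y hy
    linarith
  · -- attaining → open
    intro hatt
    rw [isOpen_iff_mem_nhds]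
    intro u huS
    by_contra hnin
    have hnotint : u ∉ interior S := fun hint => hnin (mem_interior_iff_mem_nhds.1 hint)
    -- a supporting direction v at u
    have hvsep : ∃ v : EuclideanSpace ℝ (Fin n), v ≠ 0 ∧
        ∀ w ∈ S, (inner ℝ v w : ℝ) ≤ (inner ℝ v u : ℝ) := by
      by_cases hne : (interior S).Nonempty
      · obtain ⟨f, hf⟩ := geometric_hahn_banach_open_point Sconv.interior isOpen_interior hnotint
        obtain ⟨a, ha⟩ := hne
        set v := (InnerProductSpace.toDual ℝ (EuclideanSpace ℝ (Fin n))).symm f with hv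
        have hfv : ∀ w, (inner ℝ v w : ℝ) = f w := fun w =>
          InnerProductSpace.toDual_symm_apply
        refine ⟨v, ?_, ?_⟩
        · intro hv0
          have h1 : f a < f u := hf a ha
          rw [← hfv a, ← hfv u, hv0] at h1
          simp at h1
        · intro w hw
          rw [hfv, hfv]
          by_contra hlt
          push_neg at hlt
          have hfa : f a < f u := hf a ha
          have hA : 0 < f w - f a := by linarith
          have hB : 0 < f w - f u := by linarith
          set e : ℝ := min (1/2) ((f w - f u) / (f w - f a)) with he
          have he0 : 0 < e := lt_min (by norm_num) (div_pos hB hA)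
          have he1 : e ≤ 1/2 := min_le_left _ _
          have hcombo : e • a + (1 - e) • w ∈ interior S :=
            Sconv.combo_interior_self_mem_interior ha hw he0 (by linarith) (by ring)
          have hlt2 := hf _ hcombo
          rw [map_add, map_smul, map_smul, smul_eq_mul, smul_eq_mul] at hlt2
          have heA : e * (f w - f a) ≤ f w - f u := by
            calc e * (f w - f a) ≤ ((f w - f u) / (f w - f a)) * (f w - f a) :=
                  mul_le_mul_of_nonneg_right (min_le_right _ _) hA.le
              _ = f w - f u := div_mul_cancel₀ _ hA.ne'
          nlinarith
      · have hspan : affineSpan ℝ S ≠ ⊤ := by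
          intro htop
          exact hne (Sconv.interior_nonempty_iff_affineSpan_eq_top.2 htop)
        have hdir : (affineSpan ℝ S).direction ≠ ⊤ := by
          intro htop
          exact hspan ((AffineSubspace.direction_eq_top_iff_of_nonempty
            ⟨u, subset_affineSpan ℝ S huS⟩).1 htop)
        have horth : (affineSpan ℝ S).directionᗮ ≠ ⊥ :=
          fun hbot => hdir (Submodule.orthogonal_eq_bot_iff.1 hbot)
        obtain ⟨v, hvmem, hv0⟩ := Submodule.exists_mem_ne_zero_of_ne_bot horth
        refine ⟨v, hv0, fun w hw => ?_⟩
        have hmem : w -ᵥ u ∈ (affineSpan ℝ S).direction :=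
          AffineSubspace.vsub_mem_direction (subset_affineSpan ℝ S hw)
            (subset_affineSpan ℝ S huS)
        have h0 : (inner ℝ v (w - u) : ℝ) = 0 :=
          (Submodule.mem_orthogonal' _ v).1 hvmem _ hmem
        rw [inner_sub_right] at h0
        linarith
    obtain ⟨v, hv0, hsep⟩ := hvsep
    have hvpos : (0 : ℝ) < ‖v‖ := norm_pos_iff.2 hv0
    -- the ray u + t•v leaves S
    have hray : ∀ t : ℝ, 0 < t →
        ¬ BddAbove ((fun x => (inner ℝ (u + t • v) x : ℝ) - h x) '' D) := by
      intro t ht hmem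
      have h1 := hsep _ hmem
      rw [inner_add_right, real_inner_smul_right] at h1
      have hvv : (0 : ℝ) < (inner ℝ v v : ℝ) := by
        rw [real_inner_self_eq_norm_sq]; positivity
      nlinarith
    -- minimizer at u
    obtain ⟨x₀, hx₀D, hmin⟩ := hatt u ((bdd_iff u).1 huS)
    set m := h x₀ - (inner ℝ u x₀ : ℝ) with hmdef
    -- construct points at fixed distance from x₀ with almost minimal value
    have hz : ∀ k : ℕ, ∃ z ∈ D, ‖z - x₀‖ = (1 / ‖v‖) / 2 ∧
        h z - (inner ℝ u z : ℝ) < m + 1 / ((k : ℝ) + 1) := by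
      intro k
      set t : ℝ := 1 / ((k : ℝ) + 1) with htdef
      have ht : 0 < t := by positivity
      have ht1 : t ≤ 1 := by
        rw [htdef, div_le_one (by positivity)]
        have : (0:ℝ) ≤ (k:ℝ) := Nat.cast_nonneg k
        linarith
      have hnb := hray t ht
      rw [not_bddAbove_iff] at hnb
      obtain ⟨_, ⟨xk, hxkD, rfl⟩, hgt⟩ := hnb (-m + ((k : ℝ) + 1) + t * (inner ℝ v x₀ : ℝ))
      simp only at hgt
      rw [inner_add_left, real_inner_smul_left] at hgt
      set G := h xk - (inner ℝ u xk : ℝ) with hGdef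
      have hmG : m ≤ G := hmin xk hxkD
      set R := (inner ℝ v xk : ℝ) - (inner ℝ v x₀ : ℝ) with hRdef
      have htR : (G - m) + ((k : ℝ) + 1) < t * R := by
        simp only [hGdef, hRdef]
        linarith
      have hk1 : (1 : ℝ) ≤ (k : ℝ) + 1 := by
        have : (0:ℝ) ≤ (k:ℝ) := Nat.cast_nonneg k
        linarith
      have htRpos : 1 ≤ t * R := by linarith
      have hRpos : 0 < R := by
        by_contra hR
        push_neg at hR
        have h2 : t * R ≤ t * 0 := mul_le_mul_of_nonneg_left hR ht.le
        rw [mul_zero] at h2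
        linarith
      have hR1 : 1 ≤ R := by
        have h2 : t * R ≤ 1 * R := mul_le_mul_of_nonneg_right ht1 hRpos.le
        rw [one_mul] at h2
        linarith
      set l : ℝ := R⁻¹ with hldef
      have hl0 : 0 < l := by positivity
      have hl1 : l ≤ 1 := by
        rw [hldef]
        exact inv_le_one_of_one_le₀ hR1
      set y := (1 - l) • x₀ + l • xk with hydef
      have hyD : y ∈ D := hconv.1 hx₀D hxkD (by linarith) hl0.le (by ring)
      have hgy : h y - (inner ℝ u y : ℝ) ≤ (1 - l) * m + l * G := by
        have h9 := gconv u x₀ xk hx₀D hxkD (1 - l) l (by linarith) hl0.le (by ring)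
        rw [← hydef, ← hGdef, ← hmdef] at h9
        exact h9
      have hgylt : h y - (inner ℝ u y : ℝ) < m + t := by
        have h2 : l * (G - m) < l * (t * R) := by
          apply mul_lt_mul_of_pos_left _ hl0
          linarith
        have h3 : l * (t * R) = t := by
          rw [hldef, mul_comm t R, ← mul_assoc, inv_mul_cancel₀ (ne_of_gt hRpos), one_mul]
        nlinarith
      have hysub : y - x₀ = l • (xk - x₀) := by
        rw [hydef, sub_smul, one_smul, smul_sub]
        abel
      have hyv : (inner ℝ v (y - x₀) : ℝ) = 1 := by
        rw [hysub, real_inner_smul_right, inner_sub_right, hldef, ← hRdef]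
        exact inv_mul_cancel₀ (ne_of_gt hRpos)
      have hdpos : 0 < ‖y - x₀‖ := by
        rcases eq_or_ne (y - x₀) 0 with hzero | hne
        · rw [hzero] at hyv; simp at hyv
        · exact norm_pos_iff.2 hne
      have hdge : 1 / ‖v‖ ≤ ‖y - x₀‖ := by
        have := real_inner_le_norm v (y - x₀)
        rw [hyv] at this
        rw [div_le_iff₀ hvpos]
        linarith [this, mul_comm ‖v‖ ‖y - x₀‖]
      set d := ‖y - x₀‖ with hddef
      set μ : ℝ := ((1 / ‖v‖) / 2) / d with hμdef
      have hμ0 : 0 < μ := div_pos (div_pos (one_div_pos.2 hvpos) two_pos) hdpos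
      have hμ1 : μ ≤ 1 := by
        rw [hμdef, div_le_one hdpos]
        have hv1 : (0:ℝ) < 1 / ‖v‖ := one_div_pos.2 hvpos
        calc (1 / ‖v‖) / 2 ≤ (1 / ‖v‖) := by linarith
          _ ≤ d := hdge
      set z := (1 - μ) • x₀ + μ • y with hzdef
      have hzD : z ∈ D := hconv.1 hx₀D hyD (by linarith) hμ0.le (by ring)
      have hgz : h z - (inner ℝ u z : ℝ) ≤ (1 - μ) * m + μ * (h y - (inner ℝ u y : ℝ)) := by
        have h9 := gconv u x₀ y hx₀D hyD (1 - μ) μ (by linarith) hμ0.le (by ring)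
        rw [← hzdef, ← hmdef] at h9
        exact h9
      have hgym : m ≤ h y - (inner ℝ u y : ℝ) := hmin y hyD
      have hzlt : h z - (inner ℝ u z : ℝ) < m + t := by
        have : μ * (h y - (inner ℝ u y : ℝ) - m) ≤ (h y - (inner ℝ u y : ℝ) - m) := by
          nlinarith
        nlinarith
      have hznorm : ‖z - x₀‖ = (1 / ‖v‖) / 2 := by
        have hzsub : z - x₀ = μ • (y - x₀) := by
          rw [hzdef, sub_smul, one_smul, smul_sub]
          abel
        rw [hzsub, norm_smul, Real.norm_eq_abs, abs_of_pos hμ0, ← hddef, hμdef]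
        field_simp
      exact ⟨z, hzD, hznorm, hzlt⟩
    choose z hzD hznorm hzlt using hz
    have hzball : ∀ k, z k ∈ Metric.closedBall x₀ ((1 / ‖v‖) / 2) := by
      intro k
      rw [Metric.mem_closedBall, dist_eq_norm]
      exact le_of_eq (hznorm k)
    obtain ⟨z', _, φ, hφmono, hφtend⟩ :=
      (isCompact_closedBall x₀ ((1 / ‖v‖) / 2)).tendsto_subseq hzball
    have hφatTop : Tendsto φ atTop atTop := hφmono.tendsto_atTop
    have hctend : Tendsto (fun k => m + 1 / ((φ k : ℝ) + 1) + (inner ℝ u (z (φ k)) : ℝ))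
        atTop (𝓝 (m + (inner ℝ u z' : ℝ))) := by
      have h1 : Tendsto (fun k => 1 / ((φ k : ℝ) + 1)) atTop (𝓝 0) :=
        tendsto_one_div_add_atTop_nhds_zero_nat.comp hφatTop
      have h2 : Tendsto (fun k => (inner ℝ u (z (φ k)) : ℝ)) atTop (𝓝 (inner ℝ u z' : ℝ)) :=
        Filter.Tendsto.inner tendsto_const_nhds hφtend
      have := (tendsto_const_nhds (x := m) (f := atTop (α := ℕ))).add h1 |>.add h2
      simpa using this
    obtain ⟨hz'D, hz'le⟩ := epi_lim (fun k => z (φ k))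
      (fun k => m + 1 / ((φ k : ℝ) + 1) + (inner ℝ u (z (φ k)) : ℝ)) z' (m + (inner ℝ u z' : ℝ))
      (fun k => hzD (φ k)) (fun k => by linarith [hzlt (φ k)]) hφtend hctend
    have hz'm : h z' - (inner ℝ u z' : ℝ) = m :=
      le_antisymm (by linarith) (hmin z' hz'D)
    have hz'norm : ‖z' - x₀‖ = (1 / ‖v‖) / 2 := by
      have h1 : Tendsto (fun k => ‖z (φ k) - x₀‖) atTop (𝓝 ‖z' - x₀‖) :=
        (hφtend.sub tendsto_const_nhds).norm
      have h2 : (fun k => ‖z (φ k) - x₀‖) = fun _ => (1 / ‖v‖) / 2 :=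
        funext fun k => hznorm (φ k)
      rw [h2] at h1
      exact (tendsto_nhds_unique h1 tendsto_const_nhds)
    have hz'ne : x₀ ≠ z' := by
      intro heq
      have h0 : ‖z' - x₀‖ = 0 := by rw [← heq]; simp
      rw [hz'norm] at h0
      have hpos : (0:ℝ) < (1 / ‖v‖) / 2 := div_pos (one_div_pos.2 hvpos) two_pos
      linarith
    -- strict convexity contradiction at the midpoint
    have hwD : (1/2 : ℝ) • x₀ + (1/2 : ℝ) • z' ∈ D :=
      hconv.1 hx₀D hz'D (by norm_num) (by norm_num) (by norm_num)
    have hstr := hstrict.2 hx₀D hz'D hz'ne (by norm_num : (0:ℝ) < 1/2)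
      (by norm_num : (0:ℝ) < 1/2) (by norm_num)
    simp only [smul_eq_mul] at hstr
    have hiw : (inner ℝ u ((1/2 : ℝ) • x₀ + (1/2 : ℝ) • z') : ℝ)
        = (1/2) * (inner ℝ u x₀ : ℝ) + (1/2) * (inner ℝ u z' : ℝ) := by
      rw [inner_add_right, real_inner_smul_right, real_inner_smul_right]
    have hmin' := hmin _ hwD
    rw [hiw] at hmin'
    rw [hmdef] at *
    linarith
end
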